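/- arXiv:2506.22281 — 3 statements merged into one kernel-verified Lean document; each statement's English description precedes it below -/
import Mathlib

section
/- Let (S, R) be a proper bipartition of V_A and (S', R') be a proper bipartition of V_B. Then q_S ≥ p_{S'} (coordinatewise dominance) holds if and only if (S ∪ S', R ∪ R') is an internal partition of G. -/
open Finset

variable {V : Type*} [Fintype V] [DecidableEq V]

/-- `nbr G A v = |N_A(v)|`, the number of neighbors of `v` lying in `A`. -/
def nbr (G : SimpleGraph V) [DecidableRel G.Adj] (A : Finset V) (v : V) : ℕ :=
  (G.neighborFinset v ∩ A).card

/-- The query vector `q_S` (2 entries per vertex) associated to a bipartition `(S, R)` of `V_A`;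
vertices outside `S ∪ R` are exactly those of `V_B`. -/
def qvec (G : SimpleGraph V) [DecidableRel G.Adj] (n : ℕ) (S R : Finset V) (v : V) :
    Fin 2 → ℤ :=
  if v ∈ S then ![(nbr G S v : ℤ) - (nbr G R v : ℤ), (n : ℤ)]
  else if v ∈ R then ![(n : ℤ), (nbr G R v : ℤ) - (nbr G S v : ℤ)]
  else ![(nbr G S v : ℤ) - (nbr G R v : ℤ), (nbr G R v : ℤ) - (nbr G S v : ℤ)]

/-- The data vector `p_{S'}` (2 entries per vertex) associated to a bipartition `(S', R')`
of `V_B`; vertices outside `S' ∪ R'` are exactly those of `V_A`. -/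
def pvec (G : SimpleGraph V) [DecidableRel G.Adj] (n : ℕ) (S' R' : Finset V) (v : V) :
    Fin 2 → ℤ :=
  if v ∈ S' then ![(nbr G R' v : ℤ) - (nbr G S' v : ℤ), -(n : ℤ)]
  else if v ∈ R' then ![-(n : ℤ), (nbr G S' v : ℤ) - (nbr G R' v : ℤ)]
  else ![(nbr G R' v : ℤ) - (nbr G S' v : ℤ), (nbr G S' v : ℤ) - (nbr G R' v : ℤ)]

/-- An internal partition of `G`: a proper bipartition `(V_L, V_R)` of the vertex set such that
every vertex has at least as many neighbors in its own part as in the other part. -/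
def IsInternalPartition (G : SimpleGraph V) [DecidableRel G.Adj] (VL VR : Finset V) : Prop :=
  Disjoint VL VR ∧ VL ∪ VR = Finset.univ ∧ VL.Nonempty ∧ VR.Nonempty ∧
    (∀ v ∈ VL, nbr G VR v ≤ nbr G VL v) ∧ (∀ v ∈ VR, nbr G VL v ≤ nbr G VR v)

/-! For a vertex `v`, the entry of `q_S - p_{S'}` indexed by the side of `v` is the surplus of
neighbours of `v` in `S ∪ S'` over those in `R ∪ R'` (with the sign of that side), while the
entry indexed by the other side is `±n` against a difference of neighbour counts of absolute
value at most `n`, hence always nonnegative. So dominance at `v` is exactly the internal-partition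
condition at `v`. -/

section

variable (G : SimpleGraph V) [DecidableRel G.Adj] {n : ℕ} {S R S' R' : Finset V} {v : V}

lemma nbr_le_card (A : Finset V) (v : V) : nbr G A v ≤ Fintype.card V :=
  (card_le_card inter_subset_left).trans (card_le_univ _)

lemma nbr_union {A B : Finset V} (h : Disjoint A B) (v : V) :
    nbr G (A ∪ B) v = nbr G A v + nbr G B v := by
  rw [nbr, inter_union_distrib_left,
    card_union_of_disjoint (h.mono inter_subset_right inter_subset_right)]
  rfl

theorem pvec_le_qvec_iff (hn : Fintype.card V ≤ n) (hSR : Disjoint S R) (hSR' : Disjoint S' R')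
    (hAB : Disjoint (S ∪ R) (S' ∪ R')) (hv : v ∈ (S ∪ R) ∪ (S' ∪ R')) :
    (∀ k, pvec G n S' R' v k ≤ qvec G n S R v k) ↔
      (v ∈ S ∪ S' → nbr G (R ∪ R') v ≤ nbr G (S ∪ S') v) ∧
      (v ∈ R ∪ R' → nbr G (S ∪ S') v ≤ nbr G (R ∪ R') v) := by
  rw [nbr_union G (hAB.mono subset_union_left subset_union_left),
    nbr_union G (hAB.mono subset_union_right subset_union_right)]
  have := nbr_le_card G S v
  have := nbr_le_card G R v
  have := nbr_le_card G S' v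
  have := nbr_le_card G R' v
  have hA : v ∈ S ∪ R → v ∉ S' ∧ v ∉ R' := fun h ↦ by
    simpa using disjoint_left.mp hAB h
  have hB : v ∈ S' ∪ R' → v ∉ S ∧ v ∉ R := fun h ↦ by
    simpa using disjoint_right.mp hAB h
  rw [Fin.forall_fin_two]
  rcases mem_union.mp hv with hvA | hvB
  · obtain ⟨hvS', hvR'⟩ := hA hvA
    rcases mem_union.mp hvA with hvS | hvR
    · simp [qvec, pvec, hvS, hvS', hvR', disjoint_left.mp hSR hvS]
      omega
    · simp [qvec, pvec, hvR, hvS', hvR', disjoint_right.mp hSR hvR]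
      omega
  · obtain ⟨hvS, hvR⟩ := hB hvB
    rcases mem_union.mp hvB with hvS' | hvR'
    · simp [qvec, pvec, hvS, hvR, hvS', disjoint_left.mp hSR' hvS']
      omega
    · simp [qvec, pvec, hvS, hvR, hvR', disjoint_right.mp hSR' hvR']
      omega

end

theorem stmt_0_general (G : SimpleGraph V) [DecidableRel G.Adj]
    (n : ℕ) (hn : n = Fintype.card V)
    (VA VB : Finset V) (hABdisj : Disjoint VA VB) (hABuniv : VA ∪ VB = Finset.univ)
    (S R : Finset V) (hSR : Disjoint S R) (hSRu : S ∪ R = VA)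
    (hS : S.Nonempty) (hR : R.Nonempty)
    (S' R' : Finset V) (hSR' : Disjoint S' R') (hSRu' : S' ∪ R' = VB) :
    (∀ v : V, ∀ k : Fin 2, pvec G n S' R' v k ≤ qvec G n S R v k) ↔
      IsInternalPartition G (S ∪ S') (R ∪ R') := by
  subst hSRu hSRu'
  have hLR : Disjoint (S ∪ S') (R ∪ R') := by
    simp only [disjoint_union_left, disjoint_union_right] at hABdisj ⊢
    exact ⟨⟨hSR, hABdisj.1.2.symm⟩, hABdisj.2.1, hSR'⟩
  have hcover : S ∪ S' ∪ (R ∪ R') = univ := by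
    rw [union_union_union_comm, hABuniv]
  simp only [IsInternalPartition, hLR, hcover, hS.mono subset_union_left,
    hR.mono subset_union_left, true_and, ← forall_and]
  exact forall_congr' fun v ↦ pvec_le_qvec_iff G hn.ge hSR hSR' hABdisj (hABuniv ▸ mem_univ v)

/-- for proper bipartitions `(S, R)` of `V_A` and `(S', R')` of `V_B`,
coordinatewise dominance `q_S ≥ p_{S'}` holds iff `(S ∪ S', R ∪ R')` is an internal
partition of `G`. -/
theorem stmt_0 (G : SimpleGraph V) [DecidableRel G.Adj]
    (n : ℕ) (hn : n = Fintype.card V)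
    (VA VB : Finset V) (hABdisj : Disjoint VA VB) (hABuniv : VA ∪ VB = Finset.univ)
    (S R : Finset V) (hSR : Disjoint S R) (hSRu : S ∪ R = VA)
    (hS : S.Nonempty) (hR : R.Nonempty)
    (S' R' : Finset V) (hSR' : Disjoint S' R') (hSRu' : S' ∪ R' = VB)
    (hS' : S'.Nonempty) (hR' : R'.Nonempty) :
    (∀ v : V, ∀ k : Fin 2, pvec G n S' R' v k ≤ qvec G n S R v k) ↔
      IsInternalPartition G (S ∪ S') (R ∪ R') :=
  stmt_0_general G n hn VA VB hABdisj hABuniv S R hSR hSRu hS hR S' R' hSR' hSRu'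
end

section
/- Suppose (V_L, V_R) is an internal partition of G, and set S = V_A ∩ V_L, R = V_A ∩ V_R, S' = V_B ∩ V_L, R' = V_B ∩ V_R. Then q_S ≥ p_{S'}, i.e., q_v^k ≥ p_v^k for every v ∈ V and k ∈ {1, 2}. -/
open Finset

variable {V : Type*} [Fintype V] [DecidableEq V]

lemma nbr_split (G : SimpleGraph V) [DecidableRel G.Adj]
    (VA VB : Finset V) (hABdisj : Disjoint VA VB) (hABuniv : VA ∪ VB = Finset.univ)
    (X : Finset V) (v : V) :
    nbr G (VA ∩ X) v + nbr G (VB ∩ X) v = nbr G X v := by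
  unfold nbr
  rw [← Finset.card_union_of_disjoint]
  · congr 1
    rw [← Finset.inter_union_distrib_left, ← Finset.union_inter_distrib_right, hABuniv,
      Finset.univ_inter]
  · exact Finset.disjoint_left.2 fun x hx hy => (Finset.disjoint_left.1 hABdisj)
      (Finset.mem_inter.1 (Finset.mem_of_mem_inter_right hx)).1
      (Finset.mem_inter.1 (Finset.mem_of_mem_inter_right hy)).1

lemma nbr_le (G : SimpleGraph V) [DecidableRel G.Adj] (A : Finset V) (v : V) :
    nbr G A v ≤ Fintype.card V :=
  le_trans (Finset.card_le_card (Finset.inter_subset_right)) (Finset.card_le_univ A)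

/-- if `(V_L, V_R)` is an internal partition of `G` and
`S = V_A ∩ V_L`, `R = V_A ∩ V_R`, `S' = V_B ∩ V_L`, `R' = V_B ∩ V_R`, then
`q_S ≥ p_{S'}` coordinatewise. -/
theorem stmt_1 (G : SimpleGraph V) [DecidableRel G.Adj]
    (n : ℕ) (hn : n = Fintype.card V)
    (VA VB : Finset V) (hABdisj : Disjoint VA VB) (hABuniv : VA ∪ VB = Finset.univ)
    (VL VR : Finset V) (hint : IsInternalPartition G VL VR)
    (S R S' R' : Finset V)
    (hS : S = VA ∩ VL) (hR : R = VA ∩ VR) (hS' : S' = VB ∩ VL) (hR' : R' = VB ∩ VR) :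
    ∀ v : V, ∀ k : Fin 2, pvec G n S' R' v k ≤ qvec G n S R v k := by
  subst hS hR hS' hR'
  obtain ⟨hLRdisj, hLRuniv, -, -, hL, hR2⟩ := hint
  intro v k
  have hsplitL := nbr_split G VA VB hABdisj hABuniv VL v
  have hsplitR := nbr_split G VA VB hABdisj hABuniv VR v
  have hbS := nbr_le G (VA ∩ VL) v
  have hbR := nbr_le G (VA ∩ VR) v
  have hbS' := nbr_le G (VB ∩ VL) v
  have hbR' := nbr_le G (VB ∩ VR) v
  have hvLR : v ∈ VL ∨ v ∈ VR := by
    have : v ∈ VL ∪ VR := hLRuniv ▸ Finset.mem_univ v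
    simpa using this
  have hvAB : v ∈ VA ∨ v ∈ VB := by
    have : v ∈ VA ∪ VB := hABuniv ▸ Finset.mem_univ v
    simpa using this
  have hdAB := Finset.disjoint_left.1 hABdisj
  have hdLR := Finset.disjoint_left.1 hLRdisj
  rcases hvAB with hvA | hvB <;> rcases hvLR with hvL | hvR
  · have hmS : v ∈ VA ∩ VL := Finset.mem_inter.2 ⟨hvA, hvL⟩
    have h1 := hL v hvL
    have hnS' : v ∉ VB ∩ VL := fun h => hdAB hvA (Finset.mem_inter.1 h).1
    have hnR' : v ∉ VB ∩ VR := fun h => hdAB hvA (Finset.mem_inter.1 h).1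
    simp only [pvec, qvec, if_pos hmS, if_neg hnS', if_neg hnR']
    fin_cases k <;> simp <;> omega
  · have hmR : v ∈ VA ∩ VR := Finset.mem_inter.2 ⟨hvA, hvR⟩
    have hnS : v ∉ VA ∩ VL := fun h => hdLR (Finset.mem_inter.1 h).2 hvR
    have h1 := hR2 v hvR
    have hnS' : v ∉ VB ∩ VL := fun h => hdAB hvA (Finset.mem_inter.1 h).1
    have hnR' : v ∉ VB ∩ VR := fun h => hdAB hvA (Finset.mem_inter.1 h).1
    simp only [pvec, qvec, if_pos hmR, if_neg hnS, if_neg hnS', if_neg hnR']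
    fin_cases k <;> simp <;> omega
  · have hmS' : v ∈ VB ∩ VL := Finset.mem_inter.2 ⟨hvB, hvL⟩
    have hnS : v ∉ VA ∩ VL := fun h => hdAB (Finset.mem_inter.1 h).1 hvB
    have hnR : v ∉ VA ∩ VR := fun h => hdAB (Finset.mem_inter.1 h).1 hvB
    have h1 := hL v hvL
    simp only [pvec, qvec, if_pos hmS', if_neg hnS, if_neg hnR]
    fin_cases k <;> simp <;> omega
  · have hmR' : v ∈ VB ∩ VR := Finset.mem_inter.2 ⟨hvB, hvR⟩
    have hnS' : v ∉ VB ∩ VL := fun h => hdLR (Finset.mem_inter.1 h).2 hvR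
    have hnS : v ∉ VA ∩ VL := fun h => hdAB (Finset.mem_inter.1 h).1 hvB
    have hnR : v ∉ VA ∩ VR := fun h => hdAB (Finset.mem_inter.1 h).1 hvB
    have h1 := hR2 v hvR
    simp only [pvec, qvec, if_pos hmR', if_neg hnS', if_neg hnS, if_neg hnR]
    fin_cases k <;> simp <;> omega
end

section
/- Let (S, R) be a proper bipartition of V_A and (S', R') be a proper bipartition of V_B, and suppose q_S ≥ p_{S'} + r. Then (S ∪ S', V ∖ (S ∪ S')) is a feasible interval-constrained cut of G. -/
open Finset

variable {V : Type*} [Fintype V] [DecidableEq V]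

/-- A feasible interval-constrained cut: a proper bipartition `(V_L, V_R)` of `V` satisfying
the vertex-specific interval degree constraints. -/
def IsFeasibleCut (G : SimpleGraph V) [DecidableRel G.Adj]
    (a' a'' b' b'' c' c'' d' d'' : V → ℕ) (VL VR : Finset V) : Prop :=
  Disjoint VL VR ∧ VL ∪ VR = Finset.univ ∧ VL.Nonempty ∧ VR.Nonempty ∧
    (∀ v ∈ VL, (a' v ≤ nbr G VL v ∧ nbr G VL v ≤ a'' v) ∧
      (b' v ≤ nbr G VR v ∧ nbr G VR v ≤ b'' v)) ∧
    (∀ v ∈ VR, (c' v ≤ nbr G VR v ∧ nbr G VR v ≤ c'' v) ∧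
      (d' v ≤ nbr G VL v ∧ nbr G VL v ≤ d'' v))

/-- The constraint vector `r` (8 entries per vertex). -/
def rvec (a' a'' b' b'' c' c'' d' d'' : V → ℕ) (v : V) : Fin 8 → ℤ :=
  ![(a' v : ℤ), -(a'' v : ℤ), (b' v : ℤ), -(b'' v : ℤ),
    (c' v : ℤ), -(c'' v : ℤ), (d' v : ℤ), -(d'' v : ℤ)]

/-- The query vector `q_S` (8 entries per vertex) associated to a bipartition `(S, R)` of
`V_A`; vertices outside `S ∪ R` are exactly those of `V_B`. -/
def qvec8 (G : SimpleGraph V) [DecidableRel G.Adj] (n : ℕ) (S R : Finset V) (v : V) :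
    Fin 8 → ℤ :=
  if v ∈ S then
    ![(nbr G S v : ℤ), -(nbr G S v : ℤ), (nbr G R v : ℤ), -(nbr G R v : ℤ),
      (2 * n : ℤ), (2 * n : ℤ), (2 * n : ℤ), (2 * n : ℤ)]
  else if v ∈ R then
    ![(2 * n : ℤ), (2 * n : ℤ), (2 * n : ℤ), (2 * n : ℤ),
      (nbr G R v : ℤ), -(nbr G R v : ℤ), (nbr G S v : ℤ), -(nbr G S v : ℤ)]
  else
    ![(nbr G S v : ℤ), -(nbr G S v : ℤ), (nbr G R v : ℤ), -(nbr G R v : ℤ),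
      (nbr G R v : ℤ), -(nbr G R v : ℤ), (nbr G S v : ℤ), -(nbr G S v : ℤ)]

/-- The data vector `p_{S'}` (8 entries per vertex) associated to a bipartition `(S', R')`
of `V_B`; vertices outside `S' ∪ R'` are exactly those of `V_A`. -/
def pvec8 (G : SimpleGraph V) [DecidableRel G.Adj] (n : ℕ) (S' R' : Finset V) (v : V) :
    Fin 8 → ℤ :=
  if v ∈ S' then
    ![-(nbr G S' v : ℤ), (nbr G S' v : ℤ), -(nbr G R' v : ℤ), (nbr G R' v : ℤ),
      -(2 * n : ℤ), -(2 * n : ℤ), -(2 * n : ℤ), -(2 * n : ℤ)]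
  else if v ∈ R' then
    ![-(2 * n : ℤ), -(2 * n : ℤ), -(2 * n : ℤ), -(2 * n : ℤ),
      -(nbr G R' v : ℤ), (nbr G R' v : ℤ), -(nbr G S' v : ℤ), (nbr G S' v : ℤ)]
  else
    ![-(nbr G S' v : ℤ), (nbr G S' v : ℤ), -(nbr G R' v : ℤ), (nbr G R' v : ℤ),
      -(nbr G R' v : ℤ), (nbr G R' v : ℤ), -(nbr G S' v : ℤ), (nbr G S' v : ℤ)]


section Aux
variable {V : Type*} [Fintype V] [DecidableEq V]

lemma v8_0 (a b c d e f g h : ℤ) : (![a,b,c,d,e,f,g,h] : Fin 8 → ℤ) 0 = a := rfl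
lemma v8_1 (a b c d e f g h : ℤ) : (![a,b,c,d,e,f,g,h] : Fin 8 → ℤ) 1 = b := rfl
lemma v8_2 (a b c d e f g h : ℤ) : (![a,b,c,d,e,f,g,h] : Fin 8 → ℤ) 2 = c := rfl
lemma v8_3 (a b c d e f g h : ℤ) : (![a,b,c,d,e,f,g,h] : Fin 8 → ℤ) 3 = d := rfl
lemma v8_4 (a b c d e f g h : ℤ) : (![a,b,c,d,e,f,g,h] : Fin 8 → ℤ) 4 = e := rfl
lemma v8_5 (a b c d e f g h : ℤ) : (![a,b,c,d,e,f,g,h] : Fin 8 → ℤ) 5 = f := rfl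
lemma v8_6 (a b c d e f g h : ℤ) : (![a,b,c,d,e,f,g,h] : Fin 8 → ℤ) 6 = g := rfl
lemma v8_7 (a b c d e f g h : ℤ) : (![a,b,c,d,e,f,g,h] : Fin 8 → ℤ) 7 = h := rfl

lemma nbr_union_disj (G : SimpleGraph V) [DecidableRel G.Adj] {A B : Finset V}
    (h : Disjoint A B) (v : V) : nbr G (A ∪ B) v = nbr G A v + nbr G B v := by
  unfold nbr
  rw [Finset.inter_union_distrib_left,
    Finset.card_union_of_disjoint (h.mono Finset.inter_subset_right Finset.inter_subset_right)]

end Aux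

/-- for proper bipartitions `(S, R)` of `V_A` and `(S', R')` of `V_B`,
if `q_S ≥ p_{S'} + r` coordinatewise then `(S ∪ S', V ∖ (S ∪ S'))` is a feasible
interval-constrained cut of `G`. -/
theorem stmt_9 (G : SimpleGraph V) [DecidableRel G.Adj]
    (n : ℕ) (hn : n = Fintype.card V)
    (a' a'' b' b'' c' c'' d' d'' : V → ℕ)
    (ha' : ∀ v, a' v ≤ n) (ha'' : ∀ v, a'' v ≤ n) (hb' : ∀ v, b' v ≤ n) (hb'' : ∀ v, b'' v ≤ n)
    (hc' : ∀ v, c' v ≤ n) (hc'' : ∀ v, c'' v ≤ n) (hd' : ∀ v, d' v ≤ n) (hd'' : ∀ v, d'' v ≤ n)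
    (VA VB : Finset V) (hABdisj : Disjoint VA VB) (hABuniv : VA ∪ VB = Finset.univ)
    (S R : Finset V) (hSR : Disjoint S R) (hSRu : S ∪ R = VA)
    (hS : S.Nonempty) (hR : R.Nonempty)
    (S' R' : Finset V) (hSR' : Disjoint S' R') (hSRu' : S' ∪ R' = VB)
    (hS' : S'.Nonempty) (hR' : R'.Nonempty)
    (hdom : ∀ v : V, ∀ k : Fin 8,
      pvec8 G n S' R' v k + rvec a' a'' b' b'' c' c'' d' d'' v k ≤ qvec8 G n S R v k) :
    IsFeasibleCut G a' a'' b' b'' c' c'' d' d'' (S ∪ S') (Finset.univ \ (S ∪ S')) := by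
  classical
  have hSA : S ⊆ VA := hSRu ▸ Finset.subset_union_left
  have hRA : R ⊆ VA := hSRu ▸ Finset.subset_union_right
  have hSB : S' ⊆ VB := hSRu' ▸ Finset.subset_union_left
  have hRB : R' ⊆ VB := hSRu' ▸ Finset.subset_union_right
  have dSS' : Disjoint S S' := hABdisj.mono hSA hSB
  have dSR' : Disjoint S R' := hABdisj.mono hSA hRB
  have dRS' : Disjoint R S' := hABdisj.mono hRA hSB
  have dRR' : Disjoint R R' := hABdisj.mono hRA hRB
  have hVR : Finset.univ \ (S ∪ S') = R ∪ R' := by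
    ext v
    have h1 : v ∈ VA ∨ v ∈ VB := by
      have := Finset.mem_univ v
      rw [← hABuniv, Finset.mem_union] at this; exact this
    simp only [Finset.mem_sdiff, Finset.mem_univ, true_and, Finset.mem_union, not_or]
    constructor
    · rintro ⟨hvS, hvS'⟩
      rcases h1 with h | h
      · left; rw [← hSRu, Finset.mem_union] at h; tauto
      · right; rw [← hSRu', Finset.mem_union] at h; tauto
    · rintro (h | h)
      · exact ⟨fun hs => Finset.disjoint_left.mp hSR hs h,
          fun hs => Finset.disjoint_left.mp dRS' h hs⟩
      · exact ⟨fun hs => Finset.disjoint_left.mp dSR' hs h,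
          fun hs => Finset.disjoint_left.mp hSR' hs h⟩
  have hL : ∀ v, nbr G (S ∪ S') v = nbr G S v + nbr G S' v := nbr_union_disj G dSS'
  have hRn : ∀ v, nbr G (Finset.univ \ (S ∪ S')) v = nbr G R v + nbr G R' v := by
    intro v; rw [hVR]; exact nbr_union_disj G dRR' v
  refine ⟨Finset.disjoint_sdiff, Finset.union_sdiff_of_subset (Finset.subset_univ _),
    hS.mono Finset.subset_union_left, ⟨hR.choose, ?_⟩, ?_, ?_⟩
  · rw [hVR]; exact Finset.mem_union_left _ hR.choose_spec
  · intro v hv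
    rw [Finset.mem_union] at hv
    rcases hv with hvS | hvS'
    · have hvS' : v ∉ S' := Finset.disjoint_left.mp dSS' hvS
      have hvR' : v ∉ R' := Finset.disjoint_left.mp dSR' hvS
      have h0 := hdom v 0
      have h1 := hdom v 1
      have h2 := hdom v 2
      have h3 := hdom v 3
      simp only [qvec8, pvec8, rvec, if_pos hvS, if_neg hvS', if_neg hvR',
        v8_0, v8_1, v8_2, v8_3] at h0 h1 h2 h3
      rw [hL v, hRn v]
      constructor <;> constructor <;> omega
    · have hvS : v ∉ S := Finset.disjoint_right.mp dSS' hvS'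
      have hvR : v ∉ R := Finset.disjoint_right.mp dRS' hvS'
      have h0 := hdom v 0
      have h1 := hdom v 1
      have h2 := hdom v 2
      have h3 := hdom v 3
      simp only [qvec8, pvec8, rvec, if_pos hvS', if_neg hvS, if_neg hvR,
        v8_0, v8_1, v8_2, v8_3] at h0 h1 h2 h3
      rw [hL v, hRn v]
      constructor <;> constructor <;> omega
  · intro v hv
    rw [hVR, Finset.mem_union] at hv
    rcases hv with hvR | hvR'
    · have hvS : v ∉ S := Finset.disjoint_right.mp hSR hvR
      have hvS' : v ∉ S' := Finset.disjoint_left.mp dRS' hvR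
      have hvR' : v ∉ R' := Finset.disjoint_left.mp dRR' hvR
      have h4 := hdom v 4
      have h5 := hdom v 5
      have h6 := hdom v 6
      have h7 := hdom v 7
      simp only [qvec8, pvec8, rvec, if_pos hvR, if_neg hvS, if_neg hvS', if_neg hvR',
        v8_4, v8_5, v8_6, v8_7] at h4 h5 h6 h7
      rw [hL v, hRn v]
      constructor <;> constructor <;> omega
    · have hvS : v ∉ S := Finset.disjoint_right.mp dSR' hvR'
      have hvR : v ∉ R := Finset.disjoint_right.mp dRR' hvR'
      have hvS' : v ∉ S' := Finset.disjoint_right.mp hSR' hvR'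
      have h4 := hdom v 4
      have h5 := hdom v 5
      have h6 := hdom v 6
      have h7 := hdom v 7
      simp only [qvec8, pvec8, rvec, if_pos hvR', if_neg hvS, if_neg hvS', if_neg hvR,
        v8_4, v8_5, v8_6, v8_7] at h4 h5 h6 h7
      rw [hL v, hRn v]
      constructor <;> constructor <;> omega
end
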